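/- arXiv:2211.02434 — 4 statements merged into one kernel-verified Lean document; each statement's English description precedes it below -/
import Mathlib

section
/- Let p > 1, k ≥ 1, and for r ∈ (0, 1/p) let λ_{r,k} be the unique solution in [1,∞) of λ(1-r) - (k-1) r λ^{(r-1)/r} - 1 = 0, and let C_{p,k} be the unique root in [1,∞) of (p-1)C^p - pC^{p-1} - (k-1) = 0. Then λ_{r,k} tends to C_{p,k} as r tends to 1/p from below. -/
theorem lambda_tendsto_Cpk (p : ℝ) (hp : 1 < p) (k : ℕ) (hk : 1 ≤ k)
    (lam : ℝ → ℝ)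
    (hlam : ∀ r : ℝ, 0 < r → r < 1 / p →
      1 ≤ lam r ∧ lam r * (1 - r) - ((k : ℝ) - 1) * r * lam r ^ ((r - 1) / r) - 1 = 0)
    (C : ℝ) (hC : 1 ≤ C)
    (hroot : (p - 1) * C ^ p - p * C ^ (p - 1) - ((k : ℝ) - 1) = 0) :
    Filter.Tendsto lam (nhdsWithin (1 / p) (Set.Iio (1 / p))) (nhds C) := by
  have hp0 : 0 < p := lt_trans one_pos hp
  have hip : 0 < 1 / p := by positivity
  have hip1 : 1 / p < 1 := by rw [div_lt_one hp0]; exact hp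
  have hC0 : 0 < C := lt_of_lt_of_le one_pos hC
  have hknn : (0 : ℝ) ≤ (k : ℝ) - 1 := by
    have : (1 : ℝ) ≤ (k : ℝ) := by exact_mod_cast hk
    linarith
  set H : ℝ → ℝ := fun x => x * (1 - 1 / p) - ((k : ℝ) - 1) * (1 / p) * x ^ (1 - p) - 1
    with hHdef
  -- H C = 0
  have e1 : C * C ^ (p - 1) = C ^ p := by
    nth_rewrite 1 [← Real.rpow_one C]
    rw [← Real.rpow_add hC0]; ring_nf
  have e2 : C ^ (1 - p) * C ^ (p - 1) = 1 := by
    rw [← Real.rpow_add hC0]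
    norm_num
  have hpow : (0 : ℝ) < C ^ (p - 1) := Real.rpow_pos_of_pos hC0 _
  have hHC : H C = 0 := by
    have key : H C * (p * C ^ (p - 1)) = 0 := by
      have expand : H C * (p * C ^ (p - 1)) =
          (p - 1) * (C * C ^ (p - 1)) - ((k : ℝ) - 1) * (C ^ (1 - p) * C ^ (p - 1))
            - p * C ^ (p - 1) := by
        simp only [hHdef]
        field_simp
      rw [expand, e1, e2]
      linarith [hroot]
    rcases mul_eq_zero.mp key with h | h
    · exact h
    · exfalso; nlinarith
  -- monotonicity of H on [1,∞) with gap
  have Hmono : ∀ a b : ℝ, 1 ≤ a → a ≤ b → H a + (b - a) * (1 - 1 / p) ≤ H b := by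
    intro a b ha hab
    have ha0 : 0 < a := lt_of_lt_of_le one_pos ha
    have he : 1 - p ≤ 0 := by linarith
    have hb : b ^ (1 - p) ≤ a ^ (1 - p) := Real.rpow_le_rpow_of_nonpos ha0 hab he
    have := mul_le_mul_of_nonneg_left hb (mul_nonneg hknn hip.le)
    simp only [hHdef]
    nlinarith
  -- monotonicity of the r-functional
  have mono : ∀ r a b : ℝ, 0 < r → r < 1 → 1 ≤ a → a ≤ b →
      a * (1 - r) - ((k : ℝ) - 1) * r * a ^ ((r - 1) / r) ≤
        b * (1 - r) - ((k : ℝ) - 1) * r * b ^ ((r - 1) / r) := by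
    intro r a b hr hr1 ha hab
    have ha0 : 0 < a := lt_of_lt_of_le one_pos ha
    have he : (r - 1) / r ≤ 0 := div_nonpos_of_nonpos_of_nonneg (by linarith) hr.le
    have hb : b ^ ((r - 1) / r) ≤ a ^ ((r - 1) / r) :=
      Real.rpow_le_rpow_of_nonpos ha0 hab he
    have h1 := mul_le_mul_of_nonneg_left hb (mul_nonneg hknn hr.le)
    have h2 : a * (1 - r) ≤ b * (1 - r) :=
      mul_le_mul_of_nonneg_right hab (by linarith)
    linarith
  -- continuity in r
  have tendH : ∀ x : ℝ, 0 < x →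
      Filter.Tendsto (fun r : ℝ => x * (1 - r) - ((k : ℝ) - 1) * r * x ^ ((r - 1) / r) - 1)
        (nhdsWithin (1 / p) (Set.Iio (1 / p))) (nhds (H x)) := by
    intro x hx
    have h1 : ContinuousAt (fun r : ℝ => (r - 1) / r) (1 / p) :=
      ContinuousAt.div (by fun_prop) (by fun_prop) (ne_of_gt hip)
    have h2 : ContinuousAt (fun r : ℝ => x ^ ((r - 1) / r)) (1 / p) :=
      (Real.continuousAt_const_rpow (ne_of_gt hx)).comp h1
    have hc : ContinuousAt
        (fun r : ℝ => x * (1 - r) - ((k : ℝ) - 1) * r * x ^ ((r - 1) / r) - 1) (1 / p) := by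
      fun_prop
    have hval : x * (1 - 1 / p) - ((k : ℝ) - 1) * (1 / p) * x ^ ((1 / p - 1) / (1 / p)) - 1
        = H x := by
      have : (1 / p - 1) / (1 / p) = 1 - p := by field_simp
      rw [this]
    have := hc.continuousWithinAt (s := Set.Iio (1 / p))
    rw [ContinuousWithinAt] at this
    rwa [hval] at this
  rw [Metric.tendsto_nhds]
  intro ε hε
  have hCε1 : (1 : ℝ) ≤ C + ε := by linarith
  have hHup : 0 < H (C + ε) := by
    have h := Hmono C (C + ε) hC (by linarith)
    have he : (C + ε - C) * (1 - 1 / p) = ε * (1 - 1 / p) := by ring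
    have hfac : 0 < ε * (1 - 1 / p) := mul_pos hε (by linarith)
    rw [he] at h
    have hc0 := hHC
    simp only [hHdef] at h hc0 ⊢
    linarith
  have E1 : ∀ᶠ r in nhdsWithin (1 / p) (Set.Iio (1 / p)), r < 1 / p :=
    eventually_mem_nhdsWithin
  have E2 : ∀ᶠ r in nhdsWithin (1 / p) (Set.Iio (1 / p)), 0 < r :=
    Filter.Eventually.filter_mono nhdsWithin_le_nhds (eventually_gt_nhds hip)
  have E3 : ∀ᶠ r in nhdsWithin (1 / p) (Set.Iio (1 / p)),
      0 < (C + ε) * (1 - r) - ((k : ℝ) - 1) * r * (C + ε) ^ ((r - 1) / r) - 1 :=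
    (tendH (C + ε) (by linarith)).eventually (eventually_gt_nhds hHup)
  have E4 : ∀ᶠ r in nhdsWithin (1 / p) (Set.Iio (1 / p)),
      ((1 : ℝ) ≤ C - ε →
        (C - ε) * (1 - r) - ((k : ℝ) - 1) * r * (C - ε) ^ ((r - 1) / r) - 1 < 0) := by
    by_cases hcase : (1 : ℝ) ≤ C - ε
    · have hHdn : H (C - ε) < 0 := by
        have h := Hmono (C - ε) C hcase (by linarith)
        have he : (C - (C - ε)) * (1 - 1 / p) = ε * (1 - 1 / p) := by ring
        have hfac : 0 < ε * (1 - 1 / p) := mul_pos hε (by linarith)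
        rw [he] at h
        have hc0 := hHC
        simp only [hHdef] at h hc0 ⊢
        linarith
      have := (tendH (C - ε) (by linarith)).eventually (eventually_lt_nhds hHdn)
      filter_upwards [this] with r hr _
      exact hr
    · filter_upwards with r hr; exact absurd hr hcase
  filter_upwards [E1, E2, E3, E4] with r h1 h2 h3 h4
  have hr1 : r < 1 := lt_trans h1 hip1
  obtain ⟨hl1, hl2⟩ := hlam r h2 h1
  rw [Real.dist_eq, abs_lt]
  constructor
  · -- C - ε < lam r
    by_contra hcon
    push_neg at hcon
    have hle : lam r ≤ C - ε := by linarith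
    have hge1 : (1 : ℝ) ≤ C - ε := le_trans hl1 hle
    have := mono r (lam r) (C - ε) h2 hr1 hl1 hle
    have h4' := h4 hge1
    linarith
  · -- lam r < C + ε
    by_contra hcon
    push_neg at hcon
    have hle : C + ε ≤ lam r := by linarith
    have := mono r (C + ε) (lam r) h2 hr1 hCε1 hle
    linarith
end

section
/- Suppose a nonnegative measurable function F on a measure space with finite measure μ satisfies, together with a nonnegative g ∈ L^p, the inequality ∫ F^p dμ ≤ (p/(p-1)) ∫ F^{p-1} g dμ + ((k-1)/(p-1)) ∫ g^p dμ, with F ∈ L^p and p > 1, k ≥ 1. Then ‖F‖_p ≤ C_{p,k} ‖g‖_p, where C_{p,k} is the unique root in [1,∞) of (p-1)C^p - pC^{p-1} - (k-1) = 0. -/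
open MeasureTheory Set

/-!
Hölder's inequality turns the hypothesis into the scalar inequality
`(p - 1) a ^ p ≤ p a ^ (p - 1) b + (k - 1) b ^ p` for `a = ‖F‖_p`, `b = ‖g‖_p`. Dividing by
`b ^ p` gives `φ (a / b) ≤ k - 1 = φ C` for `φ s = (p - 1) s ^ p - p s ^ (p - 1)`, and `φ` is
strictly increasing on `[1, ∞)`, so `a / b ≤ C` (when `a / b ≥ 1`; otherwise trivially).
-/

namespace Real

theorem strictMonoOn_sub_one_mul_rpow_sub_mul_rpow_sub_one {p : ℝ} (hp : 1 < p) :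
    StrictMonoOn (fun s : ℝ => (p - 1) * s ^ p - p * s ^ (p - 1)) (Ici 1) := by
  refine strictMonoOn_of_deriv_pos (convex_Ici 1) ?_ fun s hs => ?_
  · exact ((continuous_const.mul (continuous_rpow_const (by linarith))).sub
      (continuous_const.mul (continuous_rpow_const (by linarith)))).continuousOn
  rw [interior_Ici] at hs
  have hs0 : s ≠ 0 := by linarith [mem_Ioi.mp hs]
  have hderiv : HasDerivAt (fun s : ℝ => (p - 1) * s ^ p - p * s ^ (p - 1))
      ((p - 1) * (p * s ^ (p - 1)) - p * ((p - 1) * s ^ (p - 1 - 1))) s :=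
    ((hasDerivAt_rpow_const (Or.inl hs0)).const_mul (p - 1)).sub
      ((hasDerivAt_rpow_const (Or.inl hs0)).const_mul p)
  rw [hderiv.deriv]
  have hlt : s ^ (p - 1 - 1) < s ^ (p - 1) := rpow_lt_rpow_of_exponent_lt hs (by linarith)
  linarith [mul_pos (mul_pos (by linarith : (0 : ℝ) < p) (by linarith : (0 : ℝ) < p - 1))
    (sub_pos.mpr hlt)]

theorem le_mul_of_sub_one_mul_rpow_le {p a b C c : ℝ} (hp : 1 < p) (ha : 0 ≤ a) (hb : 0 ≤ b)
    (hC : 1 ≤ C) (hroot : (p - 1) * C ^ p - p * C ^ (p - 1) = c)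
    (h : (p - 1) * a ^ p ≤ p * a ^ (p - 1) * b + c * b ^ p) : a ≤ C * b := by
  rcases hb.eq_or_lt with rfl | hb
  · rw [zero_rpow (by linarith), mul_zero, mul_zero, zero_add] at h
    have hap : a ^ p = 0 := le_antisymm (nonpos_of_mul_nonpos_right h (by linarith))
      (rpow_nonneg ha p)
    rw [mul_zero, (rpow_eq_zero ha (by linarith)).mp hap]
  set t := a / b
  have hat : a = t * b := (div_mul_cancel₀ a hb.ne').symm
  rcases le_or_gt t 1 with ht | ht
  · rw [hat]; gcongr; linarith
  have hscale : b ^ p * ((p - 1) * t ^ p - p * t ^ (p - 1)) ≤ b ^ p * c := by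
    rw [hat, mul_rpow (by linarith) hb.le, mul_rpow (by linarith) hb.le,
      rpow_sub_one hb.ne' p] at h
    have hcancel : p * (t ^ (p - 1) * (b ^ p / b)) * b = p * t ^ (p - 1) * b ^ p := by
      field_simp
    linarith
  have hφ : (p - 1) * t ^ p - p * t ^ (p - 1) ≤ (p - 1) * C ^ p - p * C ^ (p - 1) :=
    hroot ▸ le_of_mul_le_mul_left hscale (rpow_pos_of_pos hb p)
  rw [hat]
  gcongr
  exact (strictMonoOn_sub_one_mul_rpow_sub_mul_rpow_sub_one hp).le_iff_le ht.le hC |>.mp hφ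

end Real

theorem MeasureTheory.integral_rpow_sub_one_mul_le {X : Type*} [MeasurableSpace X]
    {μ : Measure X} {p : ℝ} (hp : 1 < p) {F g : X → ℝ} (hF0 : 0 ≤ᵐ[μ] F) (hg0 : 0 ≤ᵐ[μ] g)
    (hF : MemLp F (ENNReal.ofReal p) μ) (hg : MemLp g (ENNReal.ofReal p) μ) :
    ∫ x, F x ^ (p - 1) * g x ∂μ ≤
      (∫ x, F x ^ p ∂μ) ^ ((p - 1) / p) * (∫ x, g x ^ p ∂μ) ^ (1 / p) := by
  have hp1 : 0 < p - 1 := by linarith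
  have hFpow : MemLp (fun x => F x ^ (p - 1)) (ENNReal.ofReal (p / (p - 1))) μ := by
    have h := hF.norm_rpow_div (ENNReal.ofReal (p - 1))
    rw [ENNReal.toReal_ofReal hp1.le, ← ENNReal.ofReal_div_of_pos hp1] at h
    refine h.ae_eq (hF0.mono fun x hx => ?_)
    simp only [Real.norm_of_nonneg hx]
  have hpow : ∫ x, (F x ^ (p - 1)) ^ (p / (p - 1)) ∂μ = ∫ x, F x ^ p ∂μ := by
    refine integral_congr_ae (hF0.mono fun x hx => ?_)
    simp only [← Real.rpow_mul hx, mul_div_cancel₀ p hp1.ne']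
  have hpq : (p / (p - 1)).HolderConjugate p := (Real.HolderConjugate.conjExponent hp).symm
  have h := integral_mul_le_Lp_mul_Lq_of_nonneg hpq
    (hF0.mono fun x hx => Real.rpow_nonneg hx (p - 1)) hg0 hFpow hg
  rwa [hpow, one_div_div] at h

theorem Lp_from_good_inequality_general
    {X : Type*} [MeasurableSpace X] (μ : Measure X)
    (p : ℝ) (hp : 1 < p) (k : ℕ)
    (F g : X → ℝ) (hF0 : ∀ x, 0 ≤ F x) (hg0 : ∀ x, 0 ≤ g x)
    (hF : MemLp F (ENNReal.ofReal p) μ) (hg : MemLp g (ENNReal.ofReal p) μ)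
    (hineq : ∫ x, F x ^ p ∂μ ≤
      (p / (p - 1)) * ∫ x, F x ^ (p - 1) * g x ∂μ +
        (((k : ℝ) - 1) / (p - 1)) * ∫ x, g x ^ p ∂μ)
    (C : ℝ) (hC : 1 ≤ C)
    (hroot : (p - 1) * C ^ p - p * C ^ (p - 1) - ((k : ℝ) - 1) = 0) :
    (∫ x, F x ^ p ∂μ) ^ (1 / p) ≤ C * (∫ x, g x ^ p ∂μ) ^ (1 / p) := by
  have hp1 : 0 < p - 1 := by linarith
  have hHolder := integral_rpow_sub_one_mul_le hp (ae_of_all μ hF0) (ae_of_all μ hg0) hF hg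
  set I := ∫ x, F x ^ p ∂μ
  set J := ∫ x, g x ^ p ∂μ
  have hI : 0 ≤ I := integral_nonneg fun x => Real.rpow_nonneg (hF0 x) p
  have hJ : 0 ≤ J := integral_nonneg fun x => Real.rpow_nonneg (hg0 x) p
  have hpow (y : ℝ) (hy : 0 ≤ y) (r : ℝ) : (y ^ (1 / p)) ^ r = y ^ (r / p) := by
    rw [← Real.rpow_mul hy, one_div_mul_eq_div]
  refine Real.le_mul_of_sub_one_mul_rpow_le (c := (k : ℝ) - 1) hp (Real.rpow_nonneg hI _)
    (Real.rpow_nonneg hJ _) hC (by linarith) ?_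
  rw [hpow I hI, hpow I hI, hpow J hJ, div_self (by linarith), Real.rpow_one, Real.rpow_one]
  calc (p - 1) * I
      ≤ (p - 1) * ((p / (p - 1)) * ∫ x, F x ^ (p - 1) * g x ∂μ + ((k - 1) / (p - 1)) * J) :=
        mul_le_mul_of_nonneg_left hineq hp1.le
    _ = p * ∫ x, F x ^ (p - 1) * g x ∂μ + (k - 1) * J := by field_simp
    _ ≤ p * (I ^ ((p - 1) / p) * J ^ (1 / p)) + (k - 1) * J := by gcongr
    _ = p * I ^ ((p - 1) / p) * J ^ (1 / p) + (k - 1) * J := by ring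

theorem Lp_from_good_inequality
    {X : Type*} [MeasurableSpace X] (μ : Measure X) [IsFiniteMeasure μ]
    (p : ℝ) (hp : 1 < p) (k : ℕ) (hk : 1 ≤ k)
    (F g : X → ℝ) (hF0 : ∀ x, 0 ≤ F x) (hg0 : ∀ x, 0 ≤ g x)
    (hF : MemLp F (ENNReal.ofReal p) μ) (hg : MemLp g (ENNReal.ofReal p) μ)
    (hineq : ∫ x, F x ^ p ∂μ ≤
      (p / (p - 1)) * ∫ x, F x ^ (p - 1) * g x ∂μ +
        (((k : ℝ) - 1) / (p - 1)) * ∫ x, g x ^ p ∂μ)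
    (C : ℝ) (hC : 1 ≤ C)
    (hroot : (p - 1) * C ^ p - p * C ^ (p - 1) - ((k : ℝ) - 1) = 0) :
    (∫ x, F x ^ p ∂μ) ^ (1 / p) ≤ C * (∫ x, g x ^ p ∂μ) ^ (1 / p) :=
  Lp_from_good_inequality_general μ p hp k F g hF0 hg0 hF hg hineq C hC hroot
end

section
/- (Integration of a weak-type inequality) Let (X, μ) be a measure space and F, g : X → [0,∞) measurable with F, g ∈ L^p(μ), p > 1, k ≥ 1 such that for every s > 0: s·μ({F > s}) + s(k-1)·μ({g > s}) ≤ ∫_{{F > s}} g dμ + (k-1)∫_{{g > s}} g dμ. Then ∫ F^p dμ + (k-1)∫ g^p dμ ≤ (p/(p-1)) ∫ (F^{p-1} g + (k-1) g^p) dμ. -/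
/-!
With `ν = g dμ` the weak-type hypothesis reads
`s (μ{F > s} + c μ{g > s}) ≤ ν{F > s} + c ν{g > s}` for `c = k - 1`. By the layer-cake formula,
`∫ F^p dμ = p ∫₀^∞ s^(p-1) μ{F > s} ds` and `∫ F^(p-1) g dμ = ∫ F^(p-1) dν =
(p-1) ∫₀^∞ s^(p-2) ν{F > s} ds`, and likewise for `g`, where `∫ g^(p-1) dν = ∫ g^p dμ`.
So multiplying the hypothesis by `s^(p-2)` and integrating gives the inequality. The argument
runs in `ℝ≥0∞`; the `L^p` hypotheses (with Hölder for `F^(p-1) g`) make all the integrals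
finite, which allows the return to `ℝ`.
-/

open MeasureTheory Set ENNReal

namespace MeasureTheory

variable {X : Type*} [MeasurableSpace X]

section LayerCake

variable (μ : Measure X) {f g : X → ℝ}

lemma measurable_measure_lt (f : X → ℝ) : Measurable fun t : ℝ => μ {x | t < f x} :=
  Antitone.measurable fun _ _ hst => measure_mono fun _ hx => lt_of_le_of_lt hst hx

lemma lintegral_rpow_add_const_mul_eq (hf : Measurable f) (hg : Measurable g) (hf0 : 0 ≤ f)
    (hg0 : 0 ≤ g) {q : ℝ} (hq : 0 < q) (C : ℝ≥0∞) :
    ∫⁻ x, ENNReal.ofReal (f x ^ q) ∂μ + C * ∫⁻ x, ENNReal.ofReal (g x ^ q) ∂μ =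
      ENNReal.ofReal q * ∫⁻ t in Ioi 0,
        (μ {x | t < f x} + C * μ {x | t < g x}) * ENNReal.ofReal (t ^ (q - 1)) := by
  have hw : Measurable fun t : ℝ => ENNReal.ofReal (t ^ (q - 1)) := by fun_prop
  have hmf : Measurable fun t : ℝ => μ {x | t < f x} * ENNReal.ofReal (t ^ (q - 1)) :=
    (measurable_measure_lt μ f).mul hw
  have hmg : Measurable fun t : ℝ => μ {x | t < g x} * ENNReal.ofReal (t ^ (q - 1)) :=
    (measurable_measure_lt μ g).mul hw
  rw [lintegral_rpow_eq_lintegral_meas_lt_mul μ (.of_forall hf0) hf.aemeasurable hq,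
    lintegral_rpow_eq_lintegral_meas_lt_mul μ (.of_forall hg0) hg.aemeasurable hq,
    mul_left_comm, ← mul_add]
  simp only [add_mul, mul_assoc]
  rw [lintegral_add_left hmf, lintegral_const_mul _ hmg]

lemma lintegral_rpow_add_le_of_weak_type (ν : Measure X) (hf : Measurable f) (hg : Measurable g)
    (hf0 : 0 ≤ f) (hg0 : 0 ≤ g) {p : ℝ} (hp : 1 < p) (C : ℝ≥0∞)
    (hweak : ∀ t : ℝ, 0 < t → ENNReal.ofReal t * (μ {x | t < f x} + C * μ {x | t < g x}) ≤
      ν {x | t < f x} + C * ν {x | t < g x}) :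
    ENNReal.ofReal (p - 1) *
        (∫⁻ x, ENNReal.ofReal (f x ^ p) ∂μ + C * ∫⁻ x, ENNReal.ofReal (g x ^ p) ∂μ) ≤
      ENNReal.ofReal p * (∫⁻ x, ENNReal.ofReal (f x ^ (p - 1)) ∂ν +
        C * ∫⁻ x, ENNReal.ofReal (g x ^ (p - 1)) ∂ν) := by
  rw [lintegral_rpow_add_const_mul_eq μ hf hg hf0 hg0 (by linarith),
    lintegral_rpow_add_const_mul_eq ν hf hg hf0 hg0 (by linarith), mul_left_comm]
  gcongr ENNReal.ofReal p * (_ * ?_)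
  refine setLIntegral_mono' measurableSet_Ioi fun t (ht : 0 < t) => ?_
  have hsplit :
      ENNReal.ofReal (t ^ (p - 1)) = ENNReal.ofReal t * ENNReal.ofReal (t ^ (p - 1 - 1)) := by
    rw [← ENNReal.ofReal_mul ht.le, ← Real.rpow_one_add' ht.le (by linarith)]
    ring_nf
  rw [hsplit, ← mul_assoc, mul_comm _ (ENNReal.ofReal t)]
  gcongr
  exact hweak t ht

end LayerCake

section Lp

variable {μ : Measure X} {f g : X → ℝ} {p : ℝ}

lemma MemLp.integrable_rpow_of_nonneg (hf : MemLp f (ENNReal.ofReal p) μ) (hf0 : 0 ≤ f)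
    (hp : 0 < p) : Integrable (fun x => f x ^ p) μ := by
  have h := hf.integrable_norm_rpow (ENNReal.ofReal_pos.2 hp).ne' ENNReal.ofReal_ne_top
  simp_rw [ENNReal.toReal_ofReal hp.le, Real.norm_of_nonneg (hf0 _)] at h
  exact h

lemma MemLp.integrable_rpow_sub_one_mul (hf : MemLp f (ENNReal.ofReal p) μ)
    (hg : MemLp g (ENNReal.ofReal p) μ) (hf0 : 0 ≤ f) (hp : 1 < p) :
    Integrable (fun x => f x ^ (p - 1) * g x) μ := by
  have hpq : (p / (p - 1)).HolderConjugate p := (Real.HolderConjugate.conjExponent hp).symm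
  have : HolderConjugate (ENNReal.ofReal (p / (p - 1))) (ENNReal.ofReal p) :=
    ENNReal.holderConjugate_iff.2 hpq.inv_add_inv_ennreal
  have hf' := hf.norm_rpow_div (ENNReal.ofReal (p - 1))
  rw [← ENNReal.ofReal_div_of_pos (by linarith), ENNReal.toReal_ofReal (by linarith)] at hf'
  have hnorm : (fun x => ‖f x‖ ^ (p - 1)) = fun x => f x ^ (p - 1) := by
    ext x; rw [Real.norm_of_nonneg (hf0 x)]
  exact (hnorm ▸ hf').integrable_mul hg

lemma measure_lt_lt_top_of_integrable_rpow (hp : 0 < p)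
    (hfp : Integrable (fun x => f x ^ p) μ) {t : ℝ} (ht : 0 < t) : μ {x | t < f x} < ∞ :=
  (measure_mono fun x (hx : t < f x) => Real.rpow_lt_rpow ht.le hx hp).trans_lt
    (hfp.measure_gt_lt_top (Real.rpow_pos_of_pos ht p))

end Lp

section WithDensity

variable (μ : Measure X) {g : X → ℝ}

lemma ofReal_setIntegral_le_withDensity (hg : Measurable g) (hg0 : 0 ≤ g) {S : Set X}
    (hS : MeasurableSet S) :
    ENNReal.ofReal (∫ x in S, g x ∂μ) ≤ μ.withDensity (fun x => ENNReal.ofReal (g x)) S := by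
  rw [integral_eq_lintegral_of_nonneg_ae (.of_forall hg0) hg.aestronglyMeasurable.restrict,
    withDensity_apply _ hS]
  exact ofReal_toReal_le

lemma lintegral_ofReal_withDensity_ofReal (hg : Measurable g) (hg0 : 0 ≤ g) (h : X → ℝ) :
    ∫⁻ x, ENNReal.ofReal (h x) ∂μ.withDensity (fun x => ENNReal.ofReal (g x)) =
      ∫⁻ x, ENNReal.ofReal (h x * g x) ∂μ := by
  rw [lintegral_withDensity_eq_lintegral_mul_non_measurable _ hg.ennreal_ofReal
    (.of_forall fun _ => ofReal_lt_top)]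
  simp_rw [Pi.mul_apply, mul_comm (h _), ENNReal.ofReal_mul (hg0 _)]

lemma ofReal_mul_add_le_withDensity_of_le (hg : Measurable g) (hg0 : 0 ≤ g) {S T : Set X}
    (hS : MeasurableSet S) (hT : MeasurableSet T) (hμS : μ S ≠ ∞) (hμT : μ T ≠ ∞) {t c : ℝ}
    (ht : 0 ≤ t) (hc : 0 ≤ c)
    (h : t * (μ S).toReal + t * c * (μ T).toReal ≤ (∫ x in S, g x ∂μ) + c * ∫ x in T, g x ∂μ) :
    ENNReal.ofReal t * (μ S + ENNReal.ofReal c * μ T) ≤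
      μ.withDensity (fun x => ENNReal.ofReal (g x)) S +
        ENNReal.ofReal c * μ.withDensity (fun x => ENNReal.ofReal (g x)) T :=
  calc ENNReal.ofReal t * (μ S + ENNReal.ofReal c * μ T)
      = ENNReal.ofReal (t * (μ S).toReal + t * c * (μ T).toReal) := by
        rw [ENNReal.ofReal_add (by positivity) (by positivity), ENNReal.ofReal_mul ht,
          ENNReal.ofReal_mul (by positivity), ENNReal.ofReal_mul ht, ENNReal.ofReal_toReal hμS,
          ENNReal.ofReal_toReal hμT]
        ring
    _ ≤ ENNReal.ofReal ((∫ x in S, g x ∂μ) + c * ∫ x in T, g x ∂μ) := ENNReal.ofReal_le_ofReal h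
    _ ≤ _ := by
        rw [ENNReal.ofReal_add (setIntegral_nonneg hS fun x _ => hg0 x)
          (mul_nonneg hc (setIntegral_nonneg hT fun x _ => hg0 x)), ENNReal.ofReal_mul hc]
        gcongr <;> exact ofReal_setIntegral_le_withDensity μ hg hg0 ‹_›

end WithDensity

lemma integral_rpow_add_le_of_weak_type (μ : Measure X) {f g : X → ℝ} (hf : Measurable f)
    (hg : Measurable g) (hf0 : 0 ≤ f) (hg0 : 0 ≤ g) {p c : ℝ} (hp : 1 < p) (hc : 0 ≤ c)
    (hfp : Integrable (fun x => f x ^ p) μ) (hgp : Integrable (fun x => g x ^ p) μ)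
    (hfg : Integrable (fun x => f x ^ (p - 1) * g x) μ)
    (hweak : ∀ t : ℝ, 0 < t →
      ENNReal.ofReal t * (μ {x | t < f x} + ENNReal.ofReal c * μ {x | t < g x}) ≤
        μ.withDensity (fun x => ENNReal.ofReal (g x)) {x | t < f x} +
          ENNReal.ofReal c * μ.withDensity (fun x => ENNReal.ofReal (g x)) {x | t < g x}) :
    (∫ x, f x ^ p ∂μ) + c * ∫ x, g x ^ p ∂μ ≤
      (p / (p - 1)) * ∫ x, (f x ^ (p - 1) * g x + c * g x ^ p) ∂μ := by
  have key := lintegral_rpow_add_le_of_weak_type μ _ hf hg hf0 hg0 hp _ hweak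
  have hgg : ∀ x, g x ^ (p - 1) * g x = g x ^ p := fun x => by
    rw [← Real.rpow_add_one' (hg0 x) (by linarith), sub_add_cancel]
  have hA : 0 ≤ᵐ[μ] fun x => f x ^ p := .of_forall fun x => Real.rpow_nonneg (hf0 x) p
  have hB : 0 ≤ᵐ[μ] fun x => g x ^ p := .of_forall fun x => Real.rpow_nonneg (hg0 x) p
  have hK : 0 ≤ᵐ[μ] fun x => f x ^ (p - 1) * g x :=
    .of_forall fun x => mul_nonneg (Real.rpow_nonneg (hf0 x) _) (hg0 x)
  have hcB := mul_nonneg hc (integral_nonneg_of_ae hB)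
  have hRHS := add_nonneg (integral_nonneg_of_ae hK) hcB
  simp only [lintegral_ofReal_withDensity_ofReal μ hg hg0, hgg] at key
  rw [← ofReal_integral_eq_lintegral_ofReal hfp hA, ← ofReal_integral_eq_lintegral_ofReal hgp hB,
    ← ofReal_integral_eq_lintegral_ofReal hfg hK, ← ENNReal.ofReal_mul hc,
    ← ENNReal.ofReal_add (integral_nonneg_of_ae hA) hcB,
    ← ENNReal.ofReal_add (integral_nonneg_of_ae hK) hcB, ← ENNReal.ofReal_mul (by linarith),
    ← ENNReal.ofReal_mul (by linarith),
    ENNReal.ofReal_le_ofReal_iff (mul_nonneg (by linarith) hRHS)] at key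
  rw [integral_add hfg (hgp.const_mul _), integral_const_mul, div_mul_eq_mul_div,
    le_div_iff₀ (by linarith)]
  linarith

end MeasureTheory

theorem integrate_weak_type_general
    {X : Type*} [MeasurableSpace X] (μ : Measure X)
    (p : ℝ) (hp : 1 < p) (k : ℕ) (hk : 1 ≤ k)
    (F g : X → ℝ) (hFm : Measurable F) (hgm : Measurable g)
    (hF0 : ∀ x, 0 ≤ F x) (hg0 : ∀ x, 0 ≤ g x)
    (hF : MemLp F (ENNReal.ofReal p) μ) (hg : MemLp g (ENNReal.ofReal p) μ)
    (hweak : ∀ s : ℝ, 0 < s →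
      s * (μ {x | s < F x}).toReal + s * ((k : ℝ) - 1) * (μ {x | s < g x}).toReal ≤
        (∫ x in {x | s < F x}, g x ∂μ) + ((k : ℝ) - 1) * ∫ x in {x | s < g x}, g x ∂μ) :
    (∫ x, F x ^ p ∂μ) + ((k : ℝ) - 1) * ∫ x, g x ^ p ∂μ ≤
      (p / (p - 1)) * ∫ x, (F x ^ (p - 1) * g x + ((k : ℝ) - 1) * g x ^ p) ∂μ := by
  have hp0 : 0 < p := by linarith
  have hc : 0 ≤ (k : ℝ) - 1 := sub_nonneg.2 (by exact_mod_cast hk)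
  have hFp := hF.integrable_rpow_of_nonneg hF0 hp0
  have hgp := hg.integrable_rpow_of_nonneg hg0 hp0
  refine integral_rpow_add_le_of_weak_type μ hFm hgm hF0 hg0 hp hc hFp hgp
    (hF.integrable_rpow_sub_one_mul hg hF0 hp) fun t ht => ?_
  exact ofReal_mul_add_le_withDensity_of_le μ hgm hg0 (measurableSet_lt measurable_const hFm)
    (measurableSet_lt measurable_const hgm) (measure_lt_lt_top_of_integrable_rpow hp0 hFp ht).ne
    (measure_lt_lt_top_of_integrable_rpow hp0 hgp ht).ne ht.le hc (hweak t ht)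

theorem integrate_weak_type
    {X : Type*} [MeasurableSpace X] (μ : Measure X) [SigmaFinite μ]
    (p : ℝ) (hp : 1 < p) (k : ℕ) (hk : 1 ≤ k)
    (F g : X → ℝ) (hFm : Measurable F) (hgm : Measurable g)
    (hF0 : ∀ x, 0 ≤ F x) (hg0 : ∀ x, 0 ≤ g x)
    (hF : MemLp F (ENNReal.ofReal p) μ) (hg : MemLp g (ENNReal.ofReal p) μ)
    (hweak : ∀ s : ℝ, 0 < s →
      s * (μ {x | s < F x}).toReal + s * ((k : ℝ) - 1) * (μ {x | s < g x}).toReal ≤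
        (∫ x in {x | s < F x}, g x ∂μ) + ((k : ℝ) - 1) * ∫ x in {x | s < g x}, g x ∂μ) :
    (∫ x, F x ^ p ∂μ) + ((k : ℝ) - 1) * ∫ x, g x ^ p ∂μ ≤
      (p / (p - 1)) * ∫ x, (F x ^ (p - 1) * g x + ((k : ℝ) - 1) * g x ^ p) ∂μ :=
  integrate_weak_type_general μ p hp k hk F g hFm hgm hF0 hg0 hF hg hweak
end

section
/- Let k ≥ 1 be an integer, 0 < r < 1, and let λ_{r,k} ≥ 1 satisfy λ(1-r) - (k-1) r λ^{(r-1)/r} - 1 = 0. Then for every t ∈ (0,1], (∫_0^t ω^{-r} dω + (k-1) ∫_0^{λ_{r,k}^{-1/r} t} ω^{-r} dω) / (t + (k-1) λ_{r,k}^{-1/r} t) = λ_{r,k} · t^{-r}. -/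
open MeasureTheory

theorem extremal_ball_average (k : ℕ) (hk : 1 ≤ k) (r : ℝ) (hr : 0 < r) (hr1 : r < 1)
    (lam : ℝ) (hlam : 1 ≤ lam)
    (heq : lam * (1 - r) - ((k : ℝ) - 1) * r * lam ^ ((r - 1) / r) - 1 = 0)
    (t : ℝ) (ht : t ∈ Set.Ioc (0 : ℝ) 1) :
    ((∫ ω in Set.Ioc (0 : ℝ) t, ω ^ (-r)) +
        ((k : ℝ) - 1) * ∫ ω in Set.Ioc (0 : ℝ) (lam ^ (-1 / r) * t), ω ^ (-r)) /
      (t + ((k : ℝ) - 1) * lam ^ (-1 / r) * t) = lam * t ^ (-r) := by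
  obtain ⟨ht0, ht1⟩ := ht
  have hlam0 : (0:ℝ) < lam := lt_of_lt_of_le one_pos hlam
  have hA : (0:ℝ) < lam ^ (-1/r) := Real.rpow_pos_of_pos hlam0 _
  have hk1 : (0:ℝ) ≤ (k:ℝ) - 1 := by
    have : (1:ℝ) ≤ k := by exact_mod_cast hk
    linarith
  have hrne : r ≠ 0 := hr.ne'
  have hI : ∀ a : ℝ, 0 < a → (∫ ω in Set.Ioc (0:ℝ) a, ω ^ (-r)) = a ^ (1-r) / (1-r) := by
    intro a ha
    rw [← intervalIntegral.integral_of_le ha.le,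
      integral_rpow (Or.inl (by linarith : (-1:ℝ) < -r)),
      Real.zero_rpow (by linarith : -r + 1 ≠ 0)]
    norm_num
    rw [show -r + 1 = 1 - r by ring]
  rw [hI t ht0, hI _ (mul_pos hA ht0)]
  have hmul : (lam ^ (-1/r) * t) ^ (1-r) = lam ^ ((r-1)/r) * t ^ (1-r) := by
    rw [Real.mul_rpow hA.le ht0.le, ← Real.rpow_mul hlam0.le,
      show -1/r * (1-r) = (r-1)/r by field_simp; ring]
  have hB : lam * lam ^ (-1/r) = lam ^ ((r-1)/r) := by
    nth_rewrite 1 [← Real.rpow_one lam]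
    rw [← Real.rpow_add hlam0]
    congr 1
    field_simp
    ring
  have htr : t ^ (1-r) = t ^ (-r) * t := by
    rw [show (1-r) = -r + 1 by ring, Real.rpow_add ht0, Real.rpow_one]
  rw [hmul, htr]
  have hden : t + ((k:ℝ) - 1) * lam ^ (-1/r) * t ≠ 0 := by
    have : 0 < t + ((k:ℝ) - 1) * lam ^ (-1/r) * t := by positivity
    exact this.ne'
  rw [div_eq_iff hden]
  have h1r : (1:ℝ) - r ≠ 0 := by linarith
  field_simp
  simp only [neg_div] at hB ⊢
  linear_combination (-1) * heq + (-(((k:ℝ)-1) * (1-r))) * hB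
end
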